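/- arXiv:2401.08929 — 6 statements merged into one kernel-verified Lean document; each statement's English description precedes it below -/
import Mathlib

section
/- Let Ã be the (m+1)×(m+1) matrix indexed by {0}∪M defined in the context. Then there exists a vector v ∈ ℝ^{m+1} with v_0 = 1, v_i > 0 for every i ∈ M, and Ã v = v; moreover, every nonzero vector w ∈ ℝ^{m+1} with nonnegative entries satisfying Ã w = w is a positive scalar multiple of v (uniqueness up to normalization). -/
/-!
Context: m ≥ 1 firms M = {1,…,m} (`Fin m`) and household 0 (`none` in
`Option (Fin m)`); `a0 i` = a_{0,i}, `aL i` = a_{i,0}, `A i j` = a_{i,j},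
`eps` = ε, and `tildeA` = Ã as in the paper.

STATEMENT 1: there exists v ∈ ℝ^{m+1} with v_0 = 1, v_i > 0 for i ∈ M, and
Ã v = v; moreover every nonzero nonnegative w with Ã w = w is a positive
scalar multiple of v.
-/

noncomputable section

open Matrix

/-- ε_i := 1 − Σ_{j∈M∪{0}} a_{i,j}. -/
def eps (m : ℕ) (aL : Fin m → ℝ) (A : Fin m → Fin m → ℝ) (i : Fin m) : ℝ :=
  1 - (aL i + ∑ j, A i j)

/-- The matrix Ã, indexed by {0}∪M (household `none`, firms `some i`):
Ã_{0,0} = 0, Ã_{0,j} = a_{j,0}, Ã_{i,0} = a_{0,i}, Ã_{i,j} = a_{j,i} + ε_j a_{0,i}. -/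
def tildeA (m : ℕ) (a0 : Fin m → ℝ) (aL : Fin m → ℝ) (A : Fin m → Fin m → ℝ) :
    Matrix (Option (Fin m)) (Option (Fin m)) ℝ :=
  Matrix.of fun i j =>
    match i, j with
    | none, none => 0
    | none, some jj => aL jj
    | some ii, none => a0 ii
    | some ii, some jj => A jj ii + eps m aL A jj * a0 ii

/-!
Ã is column stochastic, so `1 ᵥ* (Ã - 1) = 0` and Ã has a nonzero fixed vector `x`. By the
triangle inequality `|x| ≤ Ã |x|`, and since Ã preserves the sum of entries this is an equality:
`|x|` is a nonnegative fixed vector. Ã is irreducible, the household being joined to every firm in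
both directions, so a nonnegative fixed vector vanishing at one index vanishes everywhere. This
makes `|x|` strictly positive and, applied to `|w - w₀ v|` for `v₀ = 1`, gives uniqueness.
-/

namespace Matrix

variable {n R : Type*} [Fintype n] [CommRing R] [LinearOrder R] [IsStrictOrderedRing R]
  {M : Matrix n n R}

theorem abs_mulVec_le_mulVec_abs (hM : ∀ i j, 0 ≤ M i j) (x : n → R) :
    |M *ᵥ x| ≤ M *ᵥ |x| := fun i =>
  calc |∑ j, M i j * x j| ≤ ∑ j, |M i j * x j| := Finset.abs_sum_le_sum_abs _ _
    _ = ∑ j, M i j * |x j| :=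
      Finset.sum_congr rfl fun j _ => by rw [abs_mul, abs_of_nonneg (hM i j)]

theorem eq_zero_of_mulVec_eq_self_of_pos (hM : ∀ i j, 0 ≤ M i j) {u : n → R} (hu : 0 ≤ u)
    (hfix : M *ᵥ u = u) {i j : n} (hij : 0 < M i j) (hi : u i = 0) : u j = 0 := by
  have hsum : ∑ k, M i k * u k = 0 := by rw [← hi, ← congrFun hfix i]; rfl
  have hterm := (Finset.sum_eq_zero_iff_of_nonneg fun k _ => mul_nonneg (hM i k) (hu k)).mp
    hsum j (Finset.mem_univ j)
  exact (mul_eq_zero.mp hterm).resolve_left hij.ne'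

theorem IsIrreducible.eq_zero_of_mulVec_eq_self (hM : IsIrreducible M) {u : n → R} (hu : 0 ≤ u)
    (hfix : M *ᵥ u = u) {i : n} (hi : u i = 0) : u = 0 := by
  let _ : Quiver n := toQuiver M
  funext j
  obtain ⟨p, -⟩ := hM.connected i j
  induction p with
  | nil => exact hi
  | cons _ e ih => exact eq_zero_of_mulVec_eq_self_of_pos hM.nonneg hu hfix e.down ih

theorem IsIrreducible.pos_of_mulVec_eq_self (hM : IsIrreducible M) {u : n → R} (hu : 0 ≤ u)
    (hu0 : u ≠ 0) (hfix : M *ᵥ u = u) (i : n) : 0 < u i :=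
  (hu i).lt_of_ne fun h => hu0 (hM.eq_zero_of_mulVec_eq_self hu hfix h.symm)

variable [DecidableEq n]

theorem exists_mulVec_eq_self_of_mem_colStochastic [Nonempty n] (hM : M ∈ colStochastic R n) :
    ∃ x ≠ 0, M *ᵥ x = x := by
  have hdet : (M - 1).det = 0 := by
    rw [← exists_vecMul_eq_zero_iff]
    refine ⟨1, one_ne_zero, ?_⟩
    rw [vecMul_sub, one_vecMul_of_mem_colStochastic hM, vecMul_one, sub_self]
  obtain ⟨x, hx0, hx⟩ := exists_mulVec_eq_zero_iff.mpr hdet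
  exact ⟨x, hx0, by rwa [sub_mulVec, one_mulVec, sub_eq_zero] at hx⟩

/-- `M` preserves the sum of entries, so the inequality `|x| ≤ M *ᵥ |x|` is an equality. -/
theorem mulVec_abs_eq_abs_of_mulVec_eq_self (hM : M ∈ colStochastic R n) {x : n → R}
    (hx : M *ᵥ x = x) : M *ᵥ |x| = |x| := by
  have hle : |x| ≤ M *ᵥ |x| := by
    have := abs_mulVec_le_mulVec_abs hM.1 x
    rwa [hx] at this
  have hsum : ∑ i, |x| i = ∑ i, (M *ᵥ |x|) i := (sum_mulVec_of_mem_colStochastic hM).symm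
  funext i
  exact ((Finset.sum_eq_sum_iff_of_le fun i _ => hle i).mp hsum i (Finset.mem_univ i)).symm

theorem IsIrreducible.exists_pos_mulVec_eq_self [Nonempty n] (hM : IsIrreducible M)
    (hMs : M ∈ colStochastic R n) : ∃ v, (∀ i, 0 < v i) ∧ M *ᵥ v = v := by
  obtain ⟨x, hx0, hx⟩ := exists_mulVec_eq_self_of_mem_colStochastic hMs
  have habs := mulVec_abs_eq_abs_of_mulVec_eq_self hMs hx
  exact ⟨|x|, hM.pos_of_mulVec_eq_self (abs_nonneg x) (by simpa using hx0) habs, habs⟩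

theorem IsIrreducible.smul_eq_smul_of_mulVec_eq_self (hM : IsIrreducible M)
    (hMs : M ∈ colStochastic R n) {v w : n → R} (hv : M *ᵥ v = v) (hw : M *ᵥ w = w) (k : n) :
    v k • w = w k • v := by
  set z := v k • w - w k • v
  have hz : M *ᵥ z = z := by simp only [z, mulVec_sub, mulVec_smul, hv, hw]
  have hzk : |z| k = 0 := by simp [z, mul_comm]
  have := hM.eq_zero_of_mulVec_eq_self (abs_nonneg z)
    (mulVec_abs_eq_abs_of_mulVec_eq_self hMs hz) hzk
  exact sub_eq_zero.mp (funext fun i => abs_eq_zero.mp (congrFun this i))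

end Matrix

section tildeA

variable {m : ℕ} {a0 aL : Fin m → ℝ} {A : Fin m → Fin m → ℝ}

theorem eps_nonneg (hrow : ∀ i, aL i + ∑ j, A i j ≤ 1) (i : Fin m) : 0 ≤ eps m aL A i :=
  sub_nonneg.mpr (hrow i)

theorem tildeA_nonneg (ha0 : ∀ i, 0 ≤ a0 i) (haL : ∀ i, 0 ≤ aL i) (hA : ∀ i j, 0 ≤ A i j)
    (hrow : ∀ i, aL i + ∑ j, A i j ≤ 1) : ∀ i j, 0 ≤ tildeA m a0 aL A i j
  | none, none => le_rfl
  | none, some j => haL j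
  | some i, none => ha0 i
  | some i, some j => add_nonneg (hA j i) (mul_nonneg (eps_nonneg hrow j) (ha0 i))

theorem sum_tildeA_apply (ha0sum : ∑ i, a0 i = 1) (j : Option (Fin m)) :
    ∑ i, tildeA m a0 aL A i j = 1 := by
  cases j with
  | none => simpa [tildeA, Fintype.sum_option] using ha0sum
  | some j =>
    simp only [tildeA, of_apply, Fintype.sum_option, Finset.sum_add_distrib, ← Finset.mul_sum,
      ha0sum, eps]
    ring

theorem tildeA_mem_colStochastic (ha0 : ∀ i, 0 ≤ a0 i) (ha0sum : ∑ i, a0 i = 1)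
    (haL : ∀ i, 0 ≤ aL i) (hA : ∀ i j, 0 ≤ A i j) (hrow : ∀ i, aL i + ∑ j, A i j ≤ 1) :
    tildeA m a0 aL A ∈ colStochastic ℝ (Option (Fin m)) :=
  mem_colStochastic_iff_sum.mpr ⟨tildeA_nonneg ha0 haL hA hrow, sum_tildeA_apply ha0sum⟩

/-- Paths are routed through the household `none`; `IsIrreducible` asks for paths of positive
length, so `none` needs a loop through some firm. -/
theorem tildeA_isIrreducible (hm : 1 ≤ m) (ha0 : ∀ i, 0 < a0 i) (haL : ∀ i, 0 < aL i)
    (hA : ∀ i j, 0 ≤ A i j) (hrow : ∀ i, aL i + ∑ j, A i j ≤ 1) :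
    IsIrreducible (tildeA m a0 aL A) := by
  let _ : Quiver (Option (Fin m)) := toQuiver (tildeA m a0 aL A)
  have toHousehold (i : Fin m) : some i ⟶ none := ⟨ha0 i⟩
  have fromHousehold (j : Fin m) : none ⟶ some j := ⟨haL j⟩
  refine ⟨tildeA_nonneg (fun i => (ha0 i).le) (fun i => (haL i).le) hA hrow, fun i j => ?_⟩
  obtain ⟨p, hp⟩ : ∃ p : Quiver.Path i none, 0 < p.length := by
    cases i with
    | none =>
      let k : Fin m := ⟨0, hm⟩
      exact ⟨(fromHousehold k).toPath.comp (toHousehold k).toPath, by simp⟩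
    | some i => exact ⟨(toHousehold i).toPath, by simp⟩
  obtain ⟨q⟩ : Nonempty (Quiver.Path none j) := by
    cases j with
    | none => exact ⟨.nil⟩
    | some j => exact ⟨(fromHousehold j).toPath⟩
  exact ⟨p.comp q, by simp; omega⟩

end tildeA

theorem tildeA_perron_eigenvector_general
    (m : ℕ) (hm : 1 ≤ m)
    (a0 : Fin m → ℝ) (aL : Fin m → ℝ) (A : Fin m → Fin m → ℝ)
    (ha0 : ∀ i, 0 < a0 i) (ha0sum : ∑ i, a0 i = 1)
    (haL : ∀ i, 0 < aL i) (hA : ∀ i j, 0 ≤ A i j)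
    (hrow : ∀ i, aL i + ∑ j, A i j ≤ 1) :
    ∃ v : Option (Fin m) → ℝ,
      v none = 1 ∧ (∀ i : Fin m, 0 < v (some i)) ∧
      (tildeA m a0 aL A).mulVec v = v ∧
      ∀ w : Option (Fin m) → ℝ, w ≠ 0 → (∀ i, 0 ≤ w i) →
        (tildeA m a0 aL A).mulVec w = w → ∃ c : ℝ, 0 < c ∧ w = c • v := by
  have hstoch := tildeA_mem_colStochastic (fun i => (ha0 i).le) ha0sum (fun i => (haL i).le) hA hrow
  have hirr := tildeA_isIrreducible hm ha0 haL hA hrow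
  obtain ⟨u, hu, hufix⟩ := hirr.exists_pos_mulVec_eq_self hstoch
  set v := (u none)⁻¹ • u
  have hv : v none = 1 := inv_mul_cancel₀ (hu none).ne'
  have hvfix : tildeA m a0 aL A *ᵥ v = v := by rw [mulVec_smul, hufix]
  refine ⟨v, hv, fun i => mul_pos (inv_pos.mpr (hu none)) (hu (some i)), hvfix,
    fun w hw0 hw hwfix => ⟨w none, hirr.pos_of_mulVec_eq_self hw hw0 hwfix none, ?_⟩⟩
  simpa [hv] using hirr.smul_eq_smul_of_mulVec_eq_self hstoch hvfix hwfix none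

theorem tildeA_perron_eigenvector
    (m : ℕ) (hm : 1 ≤ m)
    (a0 : Fin m → ℝ) (aL : Fin m → ℝ) (A : Fin m → Fin m → ℝ)
    (ha0 : ∀ i, 0 < a0 i) (ha0sum : ∑ i, a0 i = 1)
    (haL : ∀ i, 0 < aL i) (hA : ∀ i j, 0 ≤ A i j)
    (hrow : ∀ i, aL i + ∑ j, A i j ≤ 1)
    (hex : ∃ i j, 0 < A i j) :
    ∃ v : Option (Fin m) → ℝ,
      v none = 1 ∧ (∀ i : Fin m, 0 < v (some i)) ∧
      (tildeA m a0 aL A).mulVec v = v ∧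
      ∀ w : Option (Fin m) → ℝ, w ≠ 0 → (∀ i, 0 ≤ w i) →
        (tildeA m a0 aL A).mulVec w = w → ∃ c : ℝ, 0 < c ∧ w = c • v :=
  tildeA_perron_eigenvector_general m hm a0 aL A ha0 ha0sum haL hA hrow

end
end

section
/- Fix indices i,j ∈ M with A_{i,j} > 0 and let E_{ij} denote the matrix unit with 1 in position (i,j) and 0 elsewhere. Then the function t ↦ W(A + t E_{ij}) is differentiable at t = 0, with derivative equal to ((I − A)^{-T} a_0)_i · ( ((I − A)^{-1} u(A))_j + log A_{i,j} + 1 ), where (I − A)^{-T} denotes the transpose of (I − A)^{-1}. -/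
/-!
The row-sum bound makes `1 - A` strictly diagonally dominant, so `R = (1 - A)⁻¹` exists
(Gershgorin). Along `A + t E` the resolvent has derivative `R E R` (derivative of inversion in the
Banach algebra of matrices), and `u` changes only in row `i`, where the derivative of
`x ↦ x log x` at `A i j > 0` is `log (A i j) + 1`. The product rule gives
`a₀ ⬝ (R E R u + R (log (A i j) + 1) eᵢ)`, and since `E = E_{ij}` has rank one, `R E R u` is
`(R u)_j` times the `i`-th column of `R`, so both terms factor through `(Rᵀ a₀)_i`.
-/

noncomputable section

open Matrix

/-- Entropy-corrected productivity vector u(A'). -/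
def uvec (m : ℕ) (lam c : Fin m → ℝ) (A : Matrix (Fin m) (Fin m) ℝ) :
    Fin m → ℝ :=
  fun i => Real.log (lam i) + c i + ∑ j, A i j * Real.log (A i j)

/-- Welfare W(A') = a_0 ⋅ ((I − A')⁻¹ u(A')). -/
def W (m : ℕ) (a0 lam c : Fin m → ℝ) (A : Matrix (Fin m) (Fin m) ℝ) : ℝ :=
  a0 ⬝ᵥ ((1 - A)⁻¹.mulVec (uvec m lam c A))

theorem Matrix.isUnit_one_sub_of_sum_norm_lt_one {n K : Type*} [Fintype n] [DecidableEq n]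
    [NormedField K] (A : Matrix n n K) (h : ∀ k, ∑ l, ‖A k l‖ < 1) : IsUnit (1 - A) := by
  rw [isUnit_iff_isUnit_det, isUnit_iff_ne_zero]
  refine det_ne_zero_of_sum_row_lt_diag fun k => ?_
  have hoff : ∀ l ∈ Finset.univ.erase k, ‖(1 - A) k l‖ = ‖A k l‖ := fun l hl => by
    simp [one_apply_ne' (Finset.ne_of_mem_erase hl)]
  have hk := h k
  rw [← Finset.sum_erase_add _ _ (Finset.mem_univ k)] at hk
  calc ∑ l ∈ Finset.univ.erase k, ‖(1 - A) k l‖ = ∑ l ∈ Finset.univ.erase k, ‖A k l‖ :=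
        Finset.sum_congr rfl hoff
    _ < ‖(1 : K)‖ - ‖A k k‖ := by rw [norm_one]; linarith
    _ ≤ ‖(1 - A) k k‖ := by simpa using norm_sub_norm_le (1 : K) (A k k)

theorem HasDerivAt.ringInverse {𝕜 R : Type*} [NontriviallyNormedField 𝕜] [NormedRing R]
    [HasSummableGeomSeries R] [NormedAlgebra 𝕜 R] {f : 𝕜 → R} {f' : R} {x : 𝕜}
    (hf : HasDerivAt f f' x) (hx : IsUnit (f x)) :
    HasDerivAt (fun t => Ring.inverse (f t)) (-(Ring.inverse (f x) * f' * Ring.inverse (f x))) x := by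
  obtain ⟨u, hu⟩ := hx
  have h := hasFDerivAt_ringInverse (𝕜 := 𝕜) u
  rw [hu] at h
  rw [← hu, Ring.inverse_unit]
  exact h.comp_hasDerivAt x hf

section

attribute [local instance] Matrix.linftyOpNormedRing Matrix.linftyOpNormedAlgebra

variable {n 𝕜 : Type*} [Fintype n] [DecidableEq n] [NontriviallyNormedField 𝕜] [CompleteSpace 𝕜]

theorem HasDerivAt.matrix_inv {f : 𝕜 → Matrix n n 𝕜} {f' : Matrix n n 𝕜} {x : 𝕜}
    (hf : HasDerivAt f f' x) (hx : IsUnit (f x)) :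
    HasDerivAt (fun t => (f t)⁻¹) (-((f x)⁻¹ * f' * (f x)⁻¹)) x := by
  -- Completeness is needed for the uniformity of the operator norm, which instance search does
  -- not identify with the product uniformity of `Matrix`.
  have : HasSummableGeomSeries (Matrix n n 𝕜) :=
    @instHasSummableGeomSeriesOfCompleteSpace _ _ (FiniteDimensional.complete 𝕜 _)
  simp only [nonsing_inv_eq_ringInverse]
  exact hf.ringInverse hx

theorem Matrix.hasDerivAt_inv_one_sub_add_smul (A E : Matrix n n 𝕜) (hA : IsUnit (1 - A)) :
    HasDerivAt (fun t : 𝕜 => (1 - (A + t • E))⁻¹) ((1 - A)⁻¹ * E * (1 - A)⁻¹) 0 := by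
  have hpath : HasDerivAt (fun t : 𝕜 => 1 - (A + t • E)) (-E) 0 :=
    (((hasDerivAt_id (0 : 𝕜)).smul_const E).const_add A).const_sub 1 |>.congr_deriv (by simp)
  refine (hpath.matrix_inv (by simpa using hA)).congr_deriv ?_
  simp

end

theorem HasDerivAt.dotProduct_mulVec {m n 𝕜 : Type*} [Fintype m] [Fintype n]
    [NontriviallyNormedField 𝕜] (a : m → 𝕜) {N : 𝕜 → Matrix m n 𝕜} {N' : Matrix m n 𝕜}
    {v : 𝕜 → n → 𝕜} {v' : n → 𝕜} {x : 𝕜} (hN : HasDerivAt N N' x) (hv : HasDerivAt v v' x) :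
    HasDerivAt (fun t => a ⬝ᵥ N t *ᵥ v t) (a ⬝ᵥ (N' *ᵥ v x + N x *ᵥ v')) x := by
  have hNe k l : HasDerivAt (fun t => N t k l) (N' k l) x :=
    hasDerivAt_pi.1 (hasDerivAt_pi.1 hN k) l
  have hve l : HasDerivAt (fun t => v t l) (v' l) x := hasDerivAt_pi.1 hv l
  have := HasDerivAt.fun_sum (u := Finset.univ) fun k _ =>
    (HasDerivAt.fun_sum (u := Finset.univ) fun l _ => (hNe k l).mul (hve l)).const_mul (a k)
  simpa [dotProduct, mulVec, mul_add, Finset.sum_add_distrib] using this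

theorem hasDerivAt_mul_log_add_mul {x e : ℝ} (h : e ≠ 0 → x ≠ 0) :
    HasDerivAt (fun t => (x + t * e) * Real.log (x + t * e)) (e * (Real.log x + 1)) 0 := by
  rcases eq_or_ne e 0 with rfl | he
  · simpa using hasDerivAt_const (0 : ℝ) (x * Real.log x)
  have hlin : HasDerivAt (fun t => x + t * e) e 0 := by
    simpa using ((hasDerivAt_id (0 : ℝ)).mul_const e).const_add x
  have hml : HasDerivAt (fun y => y * Real.log y) (Real.log (x + 0 * e) + 1) (x + 0 * e) :=
    Real.hasDerivAt_mul_log (by simpa using h he)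
  refine (hml.comp 0 hlin).congr_deriv ?_
  simp [mul_comm]

theorem hasDerivAt_uvec_add_smul {m : ℕ} (lam c : Fin m → ℝ) (A E : Matrix (Fin m) (Fin m) ℝ)
    (hE : ∀ k l, E k l ≠ 0 → A k l ≠ 0) :
    HasDerivAt (fun t : ℝ => uvec m lam c (A + t • E))
      (fun k => ∑ l, E k l * (Real.log (A k l) + 1)) 0 := by
  refine hasDerivAt_pi.2 fun k => ?_
  simpa [uvec] using (HasDerivAt.fun_sum fun l _ =>
    hasDerivAt_mul_log_add_mul (hE k l)).const_add (Real.log (lam k) + c k)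

theorem hasDerivAt_uvec_add_smul_single {m : ℕ} (lam c : Fin m → ℝ)
    (A : Matrix (Fin m) (Fin m) ℝ) {i j : Fin m} (hij : A i j ≠ 0) :
    HasDerivAt (fun t : ℝ => uvec m lam c (A + t • single i j 1))
      (Pi.single i (Real.log (A i j) + 1)) 0 := by
  convert hasDerivAt_uvec_add_smul lam c A (single i j 1) fun k l hkl => ?_ using 1
  · ext k
    rcases eq_or_ne k i with rfl | hk
    · simp [single_apply]
    · simp [hk, Ne.symm hk]
  · obtain ⟨rfl, rfl⟩ : i = k ∧ j = l := by simpa [single_apply] using hkl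
    exact hij

theorem Matrix.dotProduct_mul_single_mul_mulVec_add {n α : Type*} [Fintype n] [DecidableEq n]
    [CommRing α] (R : Matrix n n α) (a u : n → α) (i j : n) (y : α) :
    a ⬝ᵥ ((R * single i j 1 * R) *ᵥ u + R *ᵥ Pi.single i y) = (Rᵀ *ᵥ a) i * ((R *ᵥ u) j + y) := by
  rw [← mulVec_mulVec, ← mulVec_mulVec, single_mulVec_eq, one_mul, ← Pi.single_smul, smul_eq_mul,
    mul_one, ← mulVec_add, ← Pi.single_add, dotProduct_mulVec, dotProduct_single, mulVec_transpose]

theorem welfare_hasDerivAt_general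
    (m : ℕ) (a0 lam c : Fin m → ℝ)
    (A : Matrix (Fin m) (Fin m) ℝ)
    (hA : ∀ i j, 0 ≤ A i j) (hrow : ∀ i, ∑ j, A i j < 1)
    (i j : Fin m) (hij : 0 < A i j) :
    HasDerivAt (fun t : ℝ => W m a0 lam c (A + t • Matrix.single i j (1 : ℝ)))
      ((((1 - A)⁻¹)ᵀ.mulVec a0 i)
        * (((1 - A)⁻¹.mulVec (uvec m lam c A)) j + Real.log (A i j) + 1))
      0 := by
  have hunit : IsUnit (1 - A) :=
    isUnit_one_sub_of_sum_norm_lt_one A fun k => by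
      simpa only [Real.norm_of_nonneg (hA _ _)] using hrow k
  have hW := (hasDerivAt_inv_one_sub_add_smul A (single i j 1) hunit).dotProduct_mulVec a0
    (hasDerivAt_uvec_add_smul_single lam c A hij.ne')
  refine hW.congr_deriv ?_
  rw [add_assoc, ← dotProduct_mul_single_mul_mulVec_add, zero_smul, add_zero]

theorem welfare_hasDerivAt
    (m : ℕ) (a0 lam c : Fin m → ℝ) (hlam : ∀ i, 0 < lam i)
    (A : Matrix (Fin m) (Fin m) ℝ)
    (hA : ∀ i j, 0 ≤ A i j) (hrow : ∀ i, ∑ j, A i j < 1)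
    (i j : Fin m) (hij : 0 < A i j) :
    HasDerivAt (fun t : ℝ => W m a0 lam c (A + t • Matrix.single i j (1 : ℝ)))
      ((((1 - A)⁻¹)ᵀ.mulVec a0 i)
        * (((1 - A)⁻¹.mulVec (uvec m lam c A)) j + Real.log (A i j) + 1))
      0 :=
  welfare_hasDerivAt_general m a0 lam c A hA hrow i j hij

end
end

section
/- Suppose a_{0,i} > 0 for every i ∈ M and suppose A ∈ F maximizes W over the feasible set F. Then for every firm i, every category ℓ, and every pair j,k ∈ M_ℓ with A_{i,j} > 0 and A_{i,k} > 0, the marginal contributions coincide: ((I − A)^{-1} u(A))_j + log A_{i,j} = ((I − A)^{-1} u(A))_k + log A_{i,k}. -/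
/-!
Move mass t from A_{ij} to A_{ik}: A_t = A + t e_i (e_k − e_j)ᵀ stays feasible for small |t|,
and only row i of A and entry i of u change. Since I − A_t is a rank-one update of I − A, the
vector v_t = (I − A_t)⁻¹ u(A_t) equals v + s_t (I − A)⁻¹ e_i with
s_t = u(A_t)_i − u(A)_i + t (v_{t,k} − v_{t,j}). The weight a_0 ⋅ (I − A)⁻¹ e_i is positive by a
maximum principle for I − A (A ≥ 0 with row sums < 1), so maximality of W at A forces s_t ≤ 0,
and solving for s_t gives u(A_t)_i − u(A)_i + t (v_k − v_j) ≤ 0 for small t. This function of t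
thus has a local maximum at 0, where its derivative is log A_{ik} − log A_{ij} + v_k − v_j.
-/

noncomputable section

open Matrix Finset

/-- Feasible set F. -/
def Feasible (m l : ℕ) (cat : Fin m → Fin l) (b : Fin m → Fin l → ℝ) :
    Set (Matrix (Fin m) (Fin m) ℝ) :=
  { A | (∀ i j, 0 ≤ A i j) ∧
        ∀ (i : Fin m) (ℓ : Fin l),
          ∑ j ∈ univ.filter (fun j => cat j = ℓ), A i j = b i ℓ }

open Filter Topology

namespace Matrix

variable {n : Type*} [Fintype n] {A : Matrix n n ℝ}

theorem nonneg_of_eq_add_mulVec (hA : ∀ p q, 0 ≤ A p q) (hrow : ∀ p, ∑ q, A p q < 1)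
    {x y : n → ℝ} (hy : 0 ≤ y) (hx : x = y + A *ᵥ x) : 0 ≤ x := by
  intro q
  have : Nonempty n := ⟨q⟩
  obtain ⟨p, hp⟩ := Finite.exists_min x
  have hxp : (∑ r, A p r) * x p ≤ x p :=
    calc (∑ r, A p r) * x p = ∑ r, A p r * x p := Finset.sum_mul ..
      _ ≤ ∑ r, A p r * x r := by gcongr with r; exacts [hA p r, hp r]
      _ ≤ x p := by
        conv_rhs => rw [hx]
        simpa [mulVec, dotProduct] using hy p
  have h : 0 ≤ (1 - ∑ r, A p r) * x p := by linarith
  exact ((mul_nonneg_iff_of_pos_left (sub_pos.2 (hrow p))).1 h).trans (hp q)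

theorem det_one_sub_ne_zero [DecidableEq n] (hA : ∀ p q, 0 ≤ A p q)
    (hrow : ∀ p, ∑ q, A p q < 1) : (1 - A).det ≠ 0 := by
  intro hdet
  obtain ⟨v, hv, hAv⟩ := exists_mulVec_eq_zero_iff.2 hdet
  have hfix : ∀ w, (1 - A) *ᵥ w = 0 → w = 0 + A *ᵥ w := fun w hw => by
    rw [sub_mulVec, one_mulVec, sub_eq_zero] at hw
    rwa [zero_add]
  have hneg : (1 - A) *ᵥ (-v) = 0 := by rw [mulVec_neg, hAv, neg_zero]
  have h1 := nonneg_of_eq_add_mulVec hA hrow le_rfl (hfix v hAv)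
  have h2 := nonneg_of_eq_add_mulVec hA hrow le_rfl (hfix (-v) hneg)
  exact hv (le_antisymm (neg_nonneg.1 h2) h1)

theorem dotProduct_inv_one_sub_mulVec_single_pos [DecidableEq n] (hA : ∀ p q, 0 ≤ A p q)
    (hrow : ∀ p, ∑ q, A p q < 1) {a : n → ℝ} (ha : 0 ≤ a) {i : n} (hai : 0 < a i) :
    0 < a ⬝ᵥ ((1 - A)⁻¹ *ᵥ Pi.single i 1) := by
  set x := (1 - A)⁻¹ *ᵥ Pi.single i 1
  have hunit : IsUnit (1 - A).det := (det_one_sub_ne_zero hA hrow).isUnit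
  have hx : x = Pi.single i 1 + A *ᵥ x := by
    have : (1 - A) *ᵥ x = Pi.single i 1 := by
      rw [mulVec_mulVec, mul_nonsing_inv _ hunit, one_mulVec]
    rw [sub_mulVec, one_mulVec, sub_eq_iff_eq_add] at this
    exact this
  have hx0 : 0 ≤ x := nonneg_of_eq_add_mulVec hA hrow (Pi.single_nonneg.2 zero_le_one) hx
  have hxi : 1 ≤ x i := by
    rw [hx, Pi.add_apply, Pi.single_eq_same, le_add_iff_nonneg_right]
    exact Finset.sum_nonneg fun r _ => mul_nonneg (hA i r) (hx0 r)
  calc 0 < a i * x i := mul_pos hai (by linarith)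
    _ ≤ a ⬝ᵥ x := Finset.single_le_sum (fun r _ => mul_nonneg (ha r) (hx0 r)) (mem_univ i)

theorem eq_inv_mulVec_add_smul_of_sub_vecMulVec {K : Type*} [Field K] [DecidableEq n]
    {N : Matrix n n K} (hN : IsUnit N.det) {e d u v : n → K} {α : K}
    (hv : (N - vecMulVec e d) *ᵥ v = u + α • e) :
    v = N⁻¹ *ᵥ u + (α + d ⬝ᵥ v) • (N⁻¹ *ᵥ e) := by
  have hNv : N *ᵥ v = u + (α + d ⬝ᵥ v) • e := by
    rw [sub_mulVec, vecMulVec_mulVec, op_smul_eq_smul, sub_eq_iff_eq_add] at hv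
    rw [hv, add_smul, add_assoc]
  rw [← mulVec_smul, ← mulVec_add, ← hNv, mulVec_mulVec, nonsing_inv_mul _ hN, one_mulVec]

end Matrix

theorem eventually_add_mul_nonpos_of_rankOne_le {n : Type*} [Fintype n] [DecidableEq n]
    {N : Matrix n n ℝ} (hN : IsUnit N.det)
    {a e d u : n → ℝ} (hpos : 0 < a ⬝ᵥ (N⁻¹ *ᵥ e)) {α : ℝ → ℝ}
    (hunit : ∀ᶠ t : ℝ in 𝓝 0, IsUnit (N - vecMulVec e (t • d)).det)
    (hle : ∀ᶠ t : ℝ in 𝓝 0,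
      a ⬝ᵥ ((N - vecMulVec e (t • d))⁻¹ *ᵥ (u + α t • e)) ≤ a ⬝ᵥ (N⁻¹ *ᵥ u)) :
    ∀ᶠ t : ℝ in 𝓝 0, α t + t * (d ⬝ᵥ (N⁻¹ *ᵥ u)) ≤ 0 := by
  set γ := d ⬝ᵥ (N⁻¹ *ᵥ e)
  have hsmall : ∀ᶠ t in 𝓝 (0 : ℝ), t * γ < 1 :=
    ((continuous_mul_const γ).tendsto' 0 0 (zero_mul γ)).eventually (gt_mem_nhds zero_lt_one)
  filter_upwards [hunit, hle, hsmall] with t hunit_t hle_t hsmall_t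
  set v := (N - vecMulVec e (t • d))⁻¹ *ᵥ (u + α t • e)
  have hv : (N - vecMulVec e (t • d)) *ᵥ v = u + α t • e := by
    rw [mulVec_mulVec, mul_nonsing_inv _ hunit_t, one_mulVec]
  set s := α t + (t • d) ⬝ᵥ v
  have hdecomp : v = N⁻¹ *ᵥ u + s • (N⁻¹ *ᵥ e) := eq_inv_mulVec_add_smul_of_sub_vecMulVec hN hv
  have hs : s ≤ 0 := by
    rw [hdecomp, dotProduct_add, dotProduct_smul, smul_eq_mul, add_le_iff_nonpos_right] at hle_t
    exact nonpos_of_mul_nonpos_left hle_t hpos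
  have hs_eq : s = α t + t * (d ⬝ᵥ (N⁻¹ *ᵥ u)) + s * (t * γ) :=
    calc s = α t + t * (d ⬝ᵥ v) := by simp only [s, smul_dotProduct, smul_eq_mul]
      _ = α t + t * (d ⬝ᵥ (N⁻¹ *ᵥ u)) + s * (t * γ) := by
        rw [hdecomp, dotProduct_add, dotProduct_smul, smul_eq_mul]
        ring
  calc α t + t * (d ⬝ᵥ (N⁻¹ *ᵥ u)) = s * (1 - t * γ) := by linear_combination -hs_eq
    _ ≤ 0 := mul_nonpos_of_nonpos_of_nonneg hs (by linarith)

theorem hasDerivAt_sum_add_mul_mul_log {ι : Type*} [Fintype ι] {a d : ι → ℝ}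
    (had : ∀ r, d r ≠ 0 → a r ≠ 0) :
    HasDerivAt (fun t => ∑ r, (a r + t * d r) * Real.log (a r + t * d r))
      (∑ r, (Real.log (a r) + 1) * d r) 0 := by
  refine HasDerivAt.fun_sum fun r _ => ?_
  by_cases hd : d r = 0
  · simp only [hd, mul_zero, add_zero]
    exact hasDerivAt_const _ _
  · have hline : HasDerivAt (fun t => a r + t * d r) (d r) 0 := by
      simpa using ((hasDerivAt_id (0 : ℝ)).mul_const (d r)).const_add (a r)
    exact (Real.hasDerivAt_mul_log (had r hd)).comp_of_eq 0 hline (by simp)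

theorem sum_row_eq_of_mem_feasible {m l : ℕ} {cat : Fin m → Fin l} {b : Fin m → Fin l → ℝ}
    {A : Matrix (Fin m) (Fin m) ℝ} (hA : A ∈ Feasible m l cat b) (p : Fin m) :
    ∑ q, A p q = ∑ ℓ, b p ℓ := by
  rw [← Finset.sum_fiberwise univ cat]
  exact Finset.sum_congr rfl fun ℓ _ => hA.2 p ℓ

theorem add_vecMulVec_single_mem_feasible {m l : ℕ} {cat : Fin m → Fin l}
    {b : Fin m → Fin l → ℝ} {A : Matrix (Fin m) (Fin m) ℝ} (hA : A ∈ Feasible m l cat b)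
    {i j k : Fin m} (hjk : cat j = cat k) {t : ℝ} (htj : t ≤ A i j) (htk : -t ≤ A i k) :
    A + vecMulVec (Pi.single i 1) (t • (Pi.single k 1 - Pi.single j 1)) ∈
      Feasible m l cat b := by
  refine ⟨fun p q => ?_, fun p ℓ => ?_⟩
  · simp only [Matrix.add_apply, vecMulVec_apply, Pi.smul_apply, Pi.sub_apply, Pi.single_apply,
      smul_eq_mul]
    have := hA.1 p q
    split_ifs <;> subst_vars <;> linarith
  · simp only [Matrix.add_apply, vecMulVec_apply, Pi.smul_apply, Pi.sub_apply, smul_eq_mul,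
      Finset.sum_add_distrib, ← Finset.mul_sum, Finset.sum_sub_distrib, Finset.sum_pi_single',
      Finset.mem_filter, hjk, hA.2 p ℓ]
    simp

theorem uvec_add_vecMulVec_single {m : ℕ} (lam c : Fin m → ℝ) (A : Matrix (Fin m) (Fin m) ℝ)
    (i : Fin m) (d : Fin m → ℝ) :
    uvec m lam c (A + vecMulVec (Pi.single i 1) d) = uvec m lam c A +
      (uvec m lam c (A + vecMulVec (Pi.single i 1) d) i - uvec m lam c A i) • Pi.single i 1 := by
  ext p
  by_cases hp : p = i
  · subst hp
    simp
  · simp [uvec, vecMulVec_apply, hp]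

theorem hasDerivAt_uvec_transfer {m : ℕ} (lam c : Fin m → ℝ) {A : Matrix (Fin m) (Fin m) ℝ}
    {i j k : Fin m} (hAij : A i j ≠ 0) (hAik : A i k ≠ 0) :
    HasDerivAt
      (fun t : ℝ =>
        uvec m lam c (A + vecMulVec (Pi.single i 1) (t • (Pi.single k 1 - Pi.single j 1))) i)
      (Real.log (A i k) - Real.log (A i j)) 0 := by
  set d : Fin m → ℝ := Pi.single k 1 - Pi.single j 1
  have had : ∀ r, d r ≠ 0 → A i r ≠ 0 := by
    intro r hr
    by_cases hrk : r = k
    · rwa [hrk]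
    by_cases hrj : r = j
    · rwa [hrj]
    simp [d, hrk, hrj] at hr
  have hval : ∑ r, (Real.log (A i r) + 1) * d r = Real.log (A i k) - Real.log (A i j) := by
    change (fun r => Real.log (A i r) + 1) ⬝ᵥ d = _
    simp only [d, dotProduct_sub, dotProduct_single, mul_one]
    ring
  rw [← hval]
  refine ((hasDerivAt_sum_add_mul_mul_log had).const_add
    (Real.log (lam i) + c i)).congr_of_eventuallyEq (Eventually.of_forall fun t => ?_)
  simp [uvec, vecMulVec_apply]

theorem welfare_max_first_order_condition_general
    (m l : ℕ) (cat : Fin m → Fin l)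
    (a0 lam c : Fin m → ℝ) (ha0 : ∀ i, 0 < a0 i)
    (b0 : Fin m → ℝ) (b : Fin m → Fin l → ℝ)
    (hb0 : ∀ i, 0 < b0 i)
    (hbsum : ∀ i, b0 i + ∑ ℓ, b i ℓ = 1)
    (A : Matrix (Fin m) (Fin m) ℝ) (hAF : A ∈ Feasible m l cat b)
    (hmax : ∀ A' ∈ Feasible m l cat b, W m a0 lam c A' ≤ W m a0 lam c A)
    (i : Fin m) (ℓ : Fin l) (j k : Fin m) (hj : cat j = ℓ) (hk : cat k = ℓ)
    (hAij : 0 < A i j) (hAik : 0 < A i k) :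
    ((1 - A)⁻¹.mulVec (uvec m lam c A)) j + Real.log (A i j)
      = ((1 - A)⁻¹.mulVec (uvec m lam c A)) k + Real.log (A i k) := by
  set e : Fin m → ℝ := Pi.single i 1
  set d : Fin m → ℝ := Pi.single k 1 - Pi.single j 1
  set v := (1 - A)⁻¹ *ᵥ uvec m lam c A
  have hrow : ∀ A' ∈ Feasible m l cat b, ∀ p, ∑ q, A' p q < 1 := fun A' hA' p => by
    rw [sum_row_eq_of_mem_feasible hA']
    linarith [hbsum p, hb0 p]
  have hfeas : ∀ᶠ t : ℝ in 𝓝 0, A + vecMulVec e (t • d) ∈ Feasible m l cat b := by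
    filter_upwards [eventually_le_nhds hAij, eventually_ge_nhds (neg_lt_zero.2 hAik)]
      with t htj htk
    exact add_vecMulVec_single_mem_feasible hAF (hj.trans hk.symm) htj (by linarith)
  have hgain := eventually_add_mul_nonpos_of_rankOne_le (d := d) (u := uvec m lam c A)
    (α := fun t => uvec m lam c (A + vecMulVec e (t • d)) i - uvec m lam c A i)
    (det_one_sub_ne_zero hAF.1 (hrow A hAF)).isUnit
    (dotProduct_inv_one_sub_mulVec_single_pos hAF.1 (hrow A hAF) (fun p => (ha0 p).le) (ha0 i))
    (hfeas.mono fun t ht => by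
      rw [← sub_add_eq_sub_sub]
      exact (det_one_sub_ne_zero ht.1 (hrow _ ht)).isUnit)
    (hfeas.mono fun t ht => by
      rw [← sub_add_eq_sub_sub, ← uvec_add_vecMulVec_single]
      exact hmax _ ht)
  have hlocal : IsLocalMax (fun t => uvec m lam c (A + vecMulVec e (t • d)) i
      - uvec m lam c A i + t * (d ⬝ᵥ v)) 0 :=
    hgain.mono fun t ht => by simpa using ht
  have hderiv := ((hasDerivAt_uvec_transfer lam c hAij.ne' hAik.ne').sub_const
    (uvec m lam c A i)).add ((hasDerivAt_id (0 : ℝ)).mul_const (d ⬝ᵥ v))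
  have hfoc := hlocal.hasDerivAt_eq_zero hderiv
  simp only [d, sub_dotProduct, single_dotProduct, one_mul] at hfoc
  linarith

theorem welfare_max_first_order_condition
    (m l : ℕ) (cat : Fin m → Fin l) (hcat : Function.Surjective cat)
    (a0 lam c : Fin m → ℝ) (ha0 : ∀ i, 0 < a0 i) (hlam : ∀ i, 0 < lam i)
    (b0 : Fin m → ℝ) (b : Fin m → Fin l → ℝ)
    (hb0 : ∀ i, 0 < b0 i) (hb : ∀ i ℓ, 0 ≤ b i ℓ)
    (hbsum : ∀ i, b0 i + ∑ ℓ, b i ℓ = 1)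
    (A : Matrix (Fin m) (Fin m) ℝ) (hAF : A ∈ Feasible m l cat b)
    (hmax : ∀ A' ∈ Feasible m l cat b, W m a0 lam c A' ≤ W m a0 lam c A)
    (i : Fin m) (ℓ : Fin l) (j k : Fin m) (hj : cat j = ℓ) (hk : cat k = ℓ)
    (hAij : 0 < A i j) (hAik : 0 < A i k) :
    ((1 - A)⁻¹.mulVec (uvec m lam c A)) j + Real.log (A i j)
      = ((1 - A)⁻¹.mulVec (uvec m lam c A)) k + Real.log (A i k) :=
  welfare_max_first_order_condition_general m l cat a0 lam c ha0 b0 b hb0 hbsum A hAF hmax i ℓ j k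
    hj hk hAij hAik
end
end

section
/- For every n ≥ 1, L ≥ 1, consumption shares (a_{0,ℓ})_{ℓ=1}^L with a_{0,ℓ} > 0 and Σ_ℓ a_{0,ℓ} = 1, and every γ ∈ (0,1], there exists δ > 0 with the following property: for every requirement system b with b_{ℓ,0} ≥ γ and 0 ≤ ε_ℓ := 1 − b_{ℓ,0} − Σ_{ℓ'=1}^L b_{ℓ,ℓ'} ≤ δ for every ℓ, and for every partition 𝒬 of {1,…,n}, the 𝒬-clustered strategy profile a^𝒬 (firm i of category ℓ plays a_{i,0} = b_{ℓ,0} and input weights given by the rows of A^𝒬) is a Nash equilibrium of the replicate game 𝒢^n(a_0,b). -/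
/-!
Replicate economy with n countries and L categories. Firms are pairs
(category, country) in `Fin L × Fin n`. Consumption shares `a0 ℓ` with the
household spending `a0 ℓ / n` on each firm of category ℓ; requirements
`b0 ℓ` = b_{ℓ,0} and `B ℓ ℓ'` = b_{ℓ,ℓ'}; ε_ℓ = 1 − b_{ℓ,0} − Σ_{ℓ'} b_{ℓ,ℓ'}.
A partition 𝒬 of the countries is modeled as a `Setoid (Fin n)`; `AQ B Q` is
the 𝒬-clustered production network A^𝒬. Strategy sets, Ã_M and payoffs of
the replicate game 𝒢^n(a_0,b) are as in the paper.

STATEMENT 9: for all n, L, consumption shares and γ ∈ (0,1] there is δ > 0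
such that for every requirement system with b_{ℓ,0} ≥ γ and 0 ≤ ε_ℓ ≤ δ and
every partition 𝒬, the 𝒬-clustered profile is a Nash equilibrium of
𝒢^n(a_0,b).
-/

noncomputable section

open Matrix Finset

attribute [local instance] Classical.propDecidable

/-- Firms: (category, country). -/
abbrev Firm (L n : ℕ) := Fin L × Fin n

/-- Cardinality of the cluster (equivalence class) of country `c`. -/
def clusterCard {n : ℕ} (Q : Setoid (Fin n)) (c : Fin n) : ℕ :=
  (univ.filter fun c' => Q.r c c').card

/-- The 𝒬-clustered production network A^𝒬. -/
def AQ {L n : ℕ} (B : Fin L → Fin L → ℝ) (Q : Setoid (Fin n)) :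
    Matrix (Firm L n) (Firm L n) ℝ :=
  Matrix.of fun i j =>
    if i.1 = j.1 then (if i = j then B i.1 i.1 else 0)
    else if Q.r i.2 j.2 then B i.1 j.1 / (clusterCard Q i.2 : ℝ) else 0

/-- Household consumption shares on firms: a0 ℓ / n. -/
def a0n {L : ℕ} (n : ℕ) (a0 : Fin L → ℝ) : Firm L n → ℝ :=
  fun i => a0 i.1 / n

/-- ε_ℓ := 1 − b_{ℓ,0} − Σ_{ℓ'} b_{ℓ,ℓ'}. -/
def epsR {L : ℕ} (b0 : Fin L → ℝ) (B : Fin L → Fin L → ℝ) (ℓ : Fin L) : ℝ :=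
  1 - b0 ℓ - ∑ ℓ', B ℓ ℓ'

/-- Strategy set of firm i in the replicate game. -/
def StratR {L n : ℕ} (B : Fin L → Fin L → ℝ) (i : Firm L n) :
    Set (Firm L n → ℝ) :=
  { x | (∀ j, 0 ≤ x j) ∧ ∀ ℓ' : Fin L, ∑ c' : Fin n, x (ℓ', c') = B i.1 ℓ' }

/-- The matrix Ã_M of a profile: (Ã_M)_{j,i} = a_{i,j} + ε_{ℓ(i)} a_{0,ℓ(j)}/n. -/
def AtMR {L n : ℕ} (a0 b0 : Fin L → ℝ) (B : Fin L → Fin L → ℝ)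
    (a : Firm L n → Firm L n → ℝ) : Matrix (Firm L n) (Firm L n) ℝ :=
  Matrix.of fun j i => a i j + epsR b0 B i.1 * (a0 j.1 / n)

/-- Payoff π_i(a) = ε_{ℓ(i)} ((I − Ã_M)⁻¹ a_0^n)_i. -/
def payoffR {L n : ℕ} (a0 b0 : Fin L → ℝ) (B : Fin L → Fin L → ℝ)
    (i : Firm L n) (a : Firm L n → Firm L n → ℝ) : ℝ :=
  epsR b0 B i.1 * ((1 - AtMR a0 b0 B a)⁻¹.mulVec (a0n n a0) i)

/-!
Let `r` be row `i` of the Leontief inverse `(1 - Ã)⁻¹`. A deviation `x` of firm `i` changes only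
column `i` of `Ã`, by `u = x - aᵢ`, and the rank-one identity gives `y i = v i + (r ⬝ᵥ u) * y i`
for the old and new outputs `v`, `y`, where `y i ≥ 0`. Hence the deviation does not pay as soon
as `r ⬝ᵥ x ≤ r ⬝ᵥ aᵢ`.

For the clustered profile, `r = eᵢ + A^𝒬 r + κ` with `κ` constant on categories. Averaging over a
cluster `K` gives `(1 - B) r̄_K = κ + (share of eᵢ in K)`; as `1 - B` is an M-matrix, the average
`r̄_K` is largest for the cluster of `i`. Within a cluster, `r` equals its average outside the
category of `i`, and in that category it is largest at `i`. So in every category `r` is maximal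
where `a^𝒬ᵢ` puts its weight, i.e. `a^𝒬ᵢ` maximizes `r ⬝ᵥ x` over the strategy set.
-/

namespace Matrix

variable {ι : Type*} [Fintype ι] [DecidableEq ι] {N : Matrix ι ι ℝ}

theorem nonneg_of_one_sub_mulVec_nonneg (hN : ∀ p q, 0 ≤ N p q) (hrow : ∀ p, ∑ q, N p q < 1)
    {v : ι → ℝ} (hv : 0 ≤ (1 - N) *ᵥ v) : 0 ≤ v := by
  by_contra hneg
  obtain ⟨p, hp⟩ : ∃ p, v p < 0 := by simpa [Pi.le_def] using hneg
  obtain ⟨p₀, -, hmin⟩ := exists_min_image univ v ⟨p, mem_univ p⟩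
  have hsum : v p₀ * ∑ q, N p₀ q ≤ ∑ q, N p₀ q * v q := by
    rw [mul_sum]
    exact sum_le_sum fun q _ => by nlinarith [hmin q (mem_univ q), hN p₀ q]
  have hp₀ : 0 ≤ v p₀ - ∑ q, N p₀ q * v q := by
    have := hv p₀
    rw [sub_mulVec, one_mulVec] at this
    simpa [mulVec, dotProduct] using this
  nlinarith [hmin p (mem_univ p), hrow p₀]

theorem isUnit_det_one_sub (hN : ∀ p q, 0 ≤ N p q) (hrow : ∀ p, ∑ q, N p q < 1) :
    IsUnit (1 - N).det := by
  rw [isUnit_iff_ne_zero, Ne, ← exists_mulVec_eq_zero_iff]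
  rintro ⟨v, hv0, hv⟩
  refine hv0 (le_antisymm ?_ (nonneg_of_one_sub_mulVec_nonneg hN hrow hv.ge))
  simpa using nonneg_of_one_sub_mulVec_nonneg hN hrow (v := -v) (by simp [mulVec_neg, hv])

theorem inv_one_sub_nonneg (hN : ∀ p q, 0 ≤ N p q) (hrow : ∀ p, ∑ q, N p q < 1) (p q : ι) :
    0 ≤ (1 - N)⁻¹ p q := by
  have hcol := nonneg_of_one_sub_mulVec_nonneg hN hrow (v := (1 - N)⁻¹ *ᵥ Pi.single q 1)
    (by rw [mulVec_mulVec, mul_nonsing_inv _ (isUnit_det_one_sub hN hrow), one_mulVec]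
        exact Pi.single_nonneg.mpr zero_le_one)
  simpa [mulVec_single_one] using hcol p

theorem eq_of_sub_vecMulVec_single_mulVec_eq {K : Type*} [Field K] {M : Matrix ι ι K}
    (hM : IsUnit M.det) {u y f : ι → K} {i : ι}
    (h : (M - vecMulVec u (Pi.single i 1)) *ᵥ y = f) :
    y = M⁻¹ *ᵥ f + y i • M⁻¹ *ᵥ u := by
  have hMy : M *ᵥ y = f + y i • u := by
    rw [← h, sub_mulVec, vecMulVec_mulVec]
    simp
  rw [← mulVec_smul, ← mulVec_add, ← hMy, mulVec_mulVec, nonsing_inv_mul _ hM, one_mulVec]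

end Matrix

section Cluster

variable {L n : ℕ} {Q : Setoid (Fin n)}

def clusterAvg (Q : Setoid (Fin n)) (r : Firm L n → ℝ) (d : Fin n) (m : Fin L) : ℝ :=
  (∑ d' ∈ univ.filter (fun d' => Q.r d d'), r (m, d')) / clusterCard Q d

theorem clusterCard_pos (Q : Setoid (Fin n)) (d : Fin n) : 0 < clusterCard Q d :=
  card_pos.mpr ⟨d, mem_filter.mpr ⟨mem_univ d, Q.refl' d⟩⟩

theorem filter_rel_eq_of_rel {d d' : Fin n} (h : Q.r d d') :
    univ.filter (fun x => Q.r d x) = univ.filter (fun x => Q.r d' x) := by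
  ext x
  simp only [mem_filter, mem_univ, true_and]
  exact ⟨Q.trans' (Q.symm' h), Q.trans' h⟩

theorem card_filter_rel (d : Fin n) :
    #(univ.filter fun x => Q.r d x) = clusterCard Q d := rfl

theorem sum_filter_rel_eq_mul_clusterAvg (r : Firm L n → ℝ) (m : Fin L) (d : Fin n) :
    ∑ d' ∈ univ.filter (fun d' => Q.r d d'), r (m, d') = clusterCard Q d * clusterAvg Q r d m :=
  (mul_div_cancel₀ _ (Nat.cast_ne_zero.mpr (clusterCard_pos Q d).ne')).symm

theorem clusterAvg_eq_of_rel {d d' : Fin n} (h : Q.r d d') (r : Firm L n → ℝ) :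
    clusterAvg Q r d = clusterAvg Q r d' := by
  funext m
  simp only [clusterAvg, clusterCard, filter_rel_eq_of_rel h]

theorem clusterAvg_eq_of_forall {r : Firm L n → ℝ} {m : Fin L} {d : Fin n} {z : ℝ}
    (h : ∀ d', Q.r d d' → r (m, d') = z) : clusterAvg Q r d m = z := by
  rw [clusterAvg, sum_congr rfl fun d' hd' => h d' (mem_filter.mp hd').2, sum_const,
    nsmul_eq_mul]
  exact mul_div_cancel_left₀ z (Nat.cast_ne_zero.mpr (clusterCard_pos Q d).ne')

theorem clusterAvg_comp_fst (κ : Fin L → ℝ) (d : Fin n) :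
    clusterAvg Q (fun q => κ q.1) d = κ :=
  funext fun _ => clusterAvg_eq_of_forall fun _ _ => rfl

theorem clusterAvg_add (r s : Firm L n → ℝ) (d : Fin n) :
    clusterAvg Q (r + s) d = clusterAvg Q r d + clusterAvg Q s d := by
  funext m
  simp only [clusterAvg, Pi.add_apply, sum_add_distrib, add_div]

theorem clusterAvg_mono {r s : Firm L n → ℝ} (h : r ≤ s) (d : Fin n) :
    clusterAvg Q r d ≤ clusterAvg Q s d := fun m =>
  div_le_div_of_nonneg_right (sum_le_sum fun d' _ => h (m, d')) (Nat.cast_nonneg _)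

theorem sum_AQ_mul (B : Matrix (Fin L) (Fin L) ℝ) (r : Firm L n → ℝ) (m m' : Fin L)
    (d : Fin n) :
    ∑ d', AQ B Q (m, d) (m', d') * r (m', d') =
      if m' = m then B m m * r (m, d) else B m m' * clusterAvg Q r d m' := by
  split_ifs with h
  · subst h
    simp [AQ, Prod.ext_iff]
  · have hm : m ≠ m' := Ne.symm h
    simp only [AQ, of_apply, hm, if_false, ite_mul, zero_mul, ← sum_filter, clusterAvg]
    rw [← mul_sum]
    ring

theorem AQ_mulVec_apply (B : Matrix (Fin L) (Fin L) ℝ) (r : Firm L n → ℝ) (m : Fin L)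
    (d : Fin n) :
    (AQ B Q *ᵥ r) (m, d) =
      (B *ᵥ clusterAvg Q r d) m + B m m * (r (m, d) - clusterAvg Q r d m) := by
  have hsplit : ∀ m', (if m' = m then B m m * r (m, d) else B m m' * clusterAvg Q r d m') =
      B m m' * clusterAvg Q r d m' +
        if m' = m then B m m * (r (m, d) - clusterAvg Q r d m) else 0 := by
    intro m'
    split_ifs with h
    · subst h; ring
    · ring
  simp only [mulVec, dotProduct, Fintype.sum_prod_type, sum_AQ_mul, hsplit, sum_add_distrib,
    sum_ite_eq', mem_univ, if_true]

theorem clusterAvg_AQ_mulVec (B : Matrix (Fin L) (Fin L) ℝ) (r : Firm L n → ℝ) (d : Fin n) :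
    clusterAvg Q (AQ B Q *ᵥ r) d = B *ᵥ clusterAvg Q r d := by
  funext m
  have hk : (clusterCard Q d : ℝ) ≠ 0 := Nat.cast_ne_zero.mpr (clusterCard_pos Q d).ne'
  have hclass : ∀ d' ∈ univ.filter (fun x => Q.r d x), (AQ B Q *ᵥ r) (m, d') =
      (B *ᵥ clusterAvg Q r d) m + B m m * (r (m, d') - clusterAvg Q r d m) := by
    intro d' hd'
    rw [AQ_mulVec_apply, clusterAvg_eq_of_rel (mem_filter.mp hd').2]
  rw [clusterAvg, sum_congr rfl hclass, sum_add_distrib, ← mul_sum, sum_sub_distrib,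
    sum_filter_rel_eq_mul_clusterAvg, sum_const, sum_const, card_filter_rel, nsmul_eq_mul,
    nsmul_eq_mul, sub_self, mul_zero, add_zero]
  exact mul_div_cancel_left₀ _ hk

end Cluster

section BestResponse

variable {L n : ℕ} {Q : Setoid (Fin n)} {B : Matrix (Fin L) (Fin L) ℝ} {i : Firm L n}

theorem sum_fst_mul_of_mem_StratR {x : Firm L n → ℝ} (hx : x ∈ StratR B i) (μ : Fin L → ℝ) :
    ∑ j, μ j.1 * x j = ∑ m, μ m * B i.1 m := by
  simp only [Fintype.sum_prod_type, ← mul_sum, hx.2]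

theorem sum_mul_le_of_mem_StratR {x a r : Firm L n → ℝ} (hx : x ∈ StratR B i)
    (ha : a ∈ StratR B i) (μ : Fin L → ℝ) (hle : ∀ j, r j ≤ μ j.1)
    (heq : ∀ j, a j ≠ 0 → r j = μ j.1) :
    ∑ j, r j * x j ≤ ∑ j, r j * a j :=
  calc ∑ j, r j * x j ≤ ∑ j, μ j.1 * x j :=
        sum_le_sum fun j _ => mul_le_mul_of_nonneg_right (hle j) (hx.1 j)
    _ = ∑ j, μ j.1 * a j := by rw [sum_fst_mul_of_mem_StratR hx, sum_fst_mul_of_mem_StratR ha]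
    _ = ∑ j, r j * a j := sum_congr rfl fun j _ => by
        by_cases h : a j = 0
        · simp [h]
        · rw [heq j h]

theorem AQ_mem_StratR (hB0 : ∀ m m', 0 ≤ B m m') (Q : Setoid (Fin n)) (i : Firm L n) :
    (fun j => AQ B Q i j) ∈ StratR B i := by
  obtain ⟨ℓ, c⟩ := i
  refine ⟨fun j => ?_, fun m' => ?_⟩
  · simp only [AQ, of_apply]
    split_ifs
    all_goals first
      | exact hB0 _ _
      | exact le_rfl
      | exact div_nonneg (hB0 _ _) (Nat.cast_nonneg _)
  · have h := sum_AQ_mul (Q := Q) B (fun _ => 1) ℓ m' c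
    rw [clusterAvg_eq_of_forall fun _ _ => rfl] at h
    simp only [mul_one] at h
    rw [h]
    split_ifs with hm
    · rw [hm]
    · rfl

theorem AQ_ne_zero {j : Firm L n} (h : AQ B Q i j ≠ 0) : j = i ∨ j.1 ≠ i.1 ∧ Q.r i.2 j.2 := by
  simp only [AQ, of_apply] at h
  split_ifs at h with h₁ h₂ h₃
  · exact Or.inl h₂.symm
  · exact absurd rfl h
  · exact Or.inr ⟨Ne.symm h₁, h₃⟩
  · exact absurd rfl h

theorem diag_lt_one (hB0 : ∀ m m', 0 ≤ B m m') (hB1 : ∀ m, ∑ m', B m m' < 1) (m : Fin L) :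
    B m m < 1 :=
  (single_le_sum (fun m' _ => hB0 m m') (mem_univ m)).trans_lt (hB1 m)

theorem clusterAvg_single_eq_zero {m : Fin L} {d : Fin n} (h : ¬(m = i.1 ∧ Q.r d i.2)) :
    clusterAvg Q (Pi.single i (1 : ℝ)) d m = 0 :=
  clusterAvg_eq_of_forall fun d' hd' => by
    rw [Pi.single_eq_of_ne]
    rintro rfl
    exact h ⟨rfl, hd'⟩

theorem clusterAvg_single_nonneg (d : Fin n) (m : Fin L) :
    0 ≤ clusterAvg Q (Pi.single i (1 : ℝ)) d m :=
  (clusterAvg_comp_fst 0 d).symm.trans_le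
    (clusterAvg_mono (Pi.single_nonneg.mpr zero_le_one) d) m

theorem clusterAvg_single_le_one (d : Fin n) (m : Fin L) :
    clusterAvg Q (Pi.single i (1 : ℝ)) d m ≤ 1 :=
  (clusterAvg_mono (s := fun q => (1 : Fin L → ℝ) q.1) (fun q => by
    rw [Pi.single_apply]
    split_ifs <;> norm_num) d m).trans_eq (congrFun (clusterAvg_comp_fst 1 d) m)

variable {κ : Fin L → ℝ} {r : Firm L n → ℝ}
  (hr : r = Pi.single i (1 : ℝ) + AQ B Q *ᵥ r + fun q => κ q.1)
include hr

theorem one_sub_mulVec_clusterAvg (d : Fin n) :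
    (1 - B) *ᵥ clusterAvg Q r d = clusterAvg Q (Pi.single i (1 : ℝ)) d + κ := by
  have h := congrArg (fun s => clusterAvg Q s d) hr
  simp only [clusterAvg_add, clusterAvg_AQ_mulVec, clusterAvg_comp_fst] at h
  rw [sub_mulVec, one_mulVec, sub_eq_iff_eq_add]
  exact h.trans (by abel)

theorem one_sub_diag_mul_sub_clusterAvg (m : Fin L) (d : Fin n) :
    (1 - B m m) * (r (m, d) - clusterAvg Q r d m) =
      (Pi.single i 1 : Firm L n → ℝ) (m, d) - clusterAvg Q (Pi.single i (1 : ℝ)) d m := by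
  have hfirm := congrFun hr (m, d)
  have hclass := congrFun (one_sub_mulVec_clusterAvg hr d) m
  simp only [Pi.add_apply, AQ_mulVec_apply] at hfirm
  rw [sub_mulVec, one_mulVec, Pi.sub_apply, Pi.add_apply] at hclass
  linear_combination hfirm - hclass

variable (hB0 : ∀ m m', 0 ≤ B m m') (hB1 : ∀ m, ∑ m', B m m' < 1)
include hB0 hB1

theorem clusterAvg_le_clusterAvg_self (d : Fin n) : clusterAvg Q r d ≤ clusterAvg Q r i.2 := by
  by_cases hd : Q.r d i.2
  · exact (clusterAvg_eq_of_rel hd r).le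
  have hzero : clusterAvg Q (Pi.single i (1 : ℝ)) d = 0 :=
    funext fun m => clusterAvg_single_eq_zero fun h => hd h.2
  refine sub_nonneg.mp (nonneg_of_one_sub_mulVec_nonneg hB0 hB1 ?_)
  rw [mulVec_sub, one_sub_mulVec_clusterAvg hr, one_sub_mulVec_clusterAvg hr, hzero,
    zero_add, add_sub_cancel_right]
  exact clusterAvg_single_nonneg i.2

theorem apply_le_clusterAvg {j : Firm L n} (hj : j ≠ i) : r j ≤ clusterAvg Q r j.2 j.1 := by
  obtain ⟨m, d⟩ := j
  have h := one_sub_diag_mul_sub_clusterAvg hr m d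
  rw [Pi.single_eq_of_ne hj] at h
  refine sub_nonpos.mp (nonpos_of_mul_nonpos_right (h.trans_le ?_)
    (sub_pos.mpr (diag_lt_one hB0 hB1 m)))
  linarith [clusterAvg_single_nonneg (Q := Q) (i := i) d m]

theorem apply_eq_clusterAvg {j : Firm L n} (hj : j.1 ≠ i.1) :
    r j = clusterAvg Q r j.2 j.1 := by
  obtain ⟨m, d⟩ := j
  have h := one_sub_diag_mul_sub_clusterAvg hr m d
  rw [Pi.single_eq_of_ne (fun h => hj (congrArg Prod.fst h)),
    clusterAvg_single_eq_zero fun h => hj h.1, sub_zero] at h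
  exact sub_eq_zero.mp
    ((mul_eq_zero.mp h).resolve_left (sub_pos.mpr (diag_lt_one hB0 hB1 m)).ne')

theorem clusterAvg_le_apply_self : clusterAvg Q r i.2 i.1 ≤ r i := by
  have h := one_sub_diag_mul_sub_clusterAvg hr i.1 i.2
  rw [Prod.mk.eta, Pi.single_eq_same] at h
  refine sub_nonneg.mp (nonneg_of_mul_nonneg_right ?_ (sub_pos.mpr (diag_lt_one hB0 hB1 i.1)))
  linarith [clusterAvg_single_le_one (Q := Q) (i := i) i.2 i.1]

theorem sum_mul_le_sum_mul_AQ {x : Firm L n → ℝ} (hx : x ∈ StratR B i) :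
    ∑ j, r j * x j ≤ ∑ j, r j * AQ B Q i j := by
  refine sum_mul_le_of_mem_StratR hx (AQ_mem_StratR hB0 Q i)
    (fun m => if m = i.1 then r i else clusterAvg Q r i.2 m) (fun j => ?_) (fun j hj => ?_)
  · by_cases hji : j = i
    · simp [hji]
    have hle := (apply_le_clusterAvg hr hB0 hB1 hji).trans
      (clusterAvg_le_clusterAvg_self hr hB0 hB1 j.2 j.1)
    split_ifs with hm
    · exact hle.trans (hm ▸ clusterAvg_le_apply_self hr hB0 hB1)
    · exact hle
  · rcases AQ_ne_zero hj with rfl | ⟨hm, hQ⟩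
    · simp
    · rw [if_neg hm, apply_eq_clusterAvg hr hB0 hB1 hm, clusterAvg_eq_of_rel (Q.symm' hQ)]

end BestResponse

section Game

variable {L n : ℕ} {a0 b0 : Fin L → ℝ} {B : Fin L → Fin L → ℝ} {a : Firm L n → Firm L n → ℝ}

theorem sum_fst_div_eq_one (ha0sum : ∑ ℓ, a0 ℓ = 1) (hn : n ≠ 0) :
    ∑ p : Firm L n, a0 p.1 / n = 1 := by
  simp only [Fintype.sum_prod_type, sum_const, card_univ, Fintype.card_fin, nsmul_eq_mul]
  rw [← ha0sum]
  exact sum_congr rfl fun ℓ _ => mul_div_cancel₀ _ (Nat.cast_ne_zero.mpr hn)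

theorem sum_AtMR_apply (ha0sum : ∑ ℓ, a0 ℓ = 1) (ha : ∀ i, a i ∈ StratR B i) (q : Firm L n) :
    ∑ p, AtMR a0 b0 B a p q = 1 - b0 q.1 := by
  have hrow : ∑ p, a q p = ∑ ℓ, B q.1 ℓ := by
    rw [Fintype.sum_prod_type]
    exact sum_congr rfl fun ℓ _ => (ha q).2 ℓ
  simp only [AtMR, of_apply, sum_add_distrib, ← mul_sum, hrow,
    sum_fst_div_eq_one ha0sum q.2.pos.ne', epsR]
  ring

theorem AtMR_nonneg (ha0 : ∀ ℓ, 0 ≤ a0 ℓ) (hε : ∀ ℓ, 0 ≤ epsR b0 B ℓ)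
    (ha : ∀ i, a i ∈ StratR B i) (p q : Firm L n) : 0 ≤ AtMR a0 b0 B a p q :=
  add_nonneg ((ha q).1 p) (mul_nonneg (hε q.1) (div_nonneg (ha0 p.1) n.cast_nonneg))

theorem AtMR_update (i : Firm L n) (x : Firm L n → ℝ) :
    AtMR a0 b0 B (Function.update a i x) =
      AtMR a0 b0 B a + vecMulVec (x - a i) (Pi.single i 1) := by
  ext p q
  by_cases hq : q = i
  · subst hq
    simp only [AtMR, of_apply, Function.update_self, vecMulVec, Pi.sub_apply, Matrix.add_apply,
      Pi.single_eq_same, mul_one]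
    ring
  · simp [AtMR, vecMulVec, Function.update_of_ne hq, Pi.single_eq_of_ne hq]

theorem inv_one_sub_AtMR_row_eq (hM : IsUnit (1 - AtMR a0 b0 B a).det) (i : Firm L n) :
    (1 - AtMR a0 b0 B a)⁻¹ i = Pi.single i 1 +
      (fun q => a q ⬝ᵥ (1 - AtMR a0 b0 B a)⁻¹ i) +
      fun q => epsR b0 B q.1 * ((1 - AtMR a0 b0 B a)⁻¹ i ⬝ᵥ a0n n a0) := by
  set S := (1 - AtMR a0 b0 B a)⁻¹
  have hS : S = 1 + S * AtMR a0 b0 B a := by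
    have h := nonsing_inv_mul _ hM
    rw [mul_sub, mul_one] at h
    exact sub_eq_iff_eq_add.mp h
  funext q
  rw [congrFun (congrFun hS i) q]
  simp only [Matrix.add_apply, mul_apply, one_apply, Pi.add_apply, Pi.single_apply, AtMR,
    of_apply, mul_add, sum_add_distrib, dotProduct, a0n, eq_comm (a := q)]
  rw [add_assoc, mul_sum]
  congr 2
  · exact sum_congr rfl fun _ _ => mul_comm _ _
  · exact sum_congr rfl fun _ _ => mul_left_comm _ _ _

variable (ha0 : ∀ ℓ, 0 ≤ a0 ℓ) (ha0sum : ∑ ℓ, a0 ℓ = 1)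
  (hb0 : ∀ ℓ, 0 < b0 ℓ) (hε : ∀ ℓ, 0 ≤ epsR b0 B ℓ)
include ha0 ha0sum hb0 hε

theorem isUnit_det_one_sub_AtMR (ha : ∀ i, a i ∈ StratR B i) :
    IsUnit (1 - AtMR a0 b0 B a).det := by
  have h := isUnit_det_one_sub (N := (AtMR a0 b0 B a)ᵀ) (fun p q => AtMR_nonneg ha0 hε ha q p)
    fun q => (sum_AtMR_apply ha0sum ha q).trans_lt (by linarith [hb0 q.1])
  rwa [← transpose_one, ← transpose_sub, det_transpose] at h

theorem inv_one_sub_AtMR_nonneg (ha : ∀ i, a i ∈ StratR B i) (p q : Firm L n) :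
    0 ≤ (1 - AtMR a0 b0 B a)⁻¹ p q := by
  have h := inv_one_sub_nonneg (N := (AtMR a0 b0 B a)ᵀ) (fun p q => AtMR_nonneg ha0 hε ha q p)
    (fun q => (sum_AtMR_apply ha0sum ha q).trans_lt (by linarith [hb0 q.1])) q p
  rwa [← transpose_one, ← transpose_sub, ← transpose_nonsing_inv] at h

theorem payoffR_update_le (ha : ∀ i, a i ∈ StratR B i) {i : Firm L n} {x : Firm L n → ℝ}
    (hx : x ∈ StratR B i)
    (hbr : (1 - AtMR a0 b0 B a)⁻¹ i ⬝ᵥ x ≤ (1 - AtMR a0 b0 B a)⁻¹ i ⬝ᵥ a i) :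
    payoffR a0 b0 B i (Function.update a i x) ≤ payoffR a0 b0 B i a := by
  have ha' : ∀ j, Function.update a i x j ∈ StratR B j := by
    intro j
    by_cases hj : j = i
    · subst hj
      rwa [Function.update_self]
    · rw [Function.update_of_ne hj]
      exact ha j
  have hM := isUnit_det_one_sub_AtMR ha0 ha0sum hb0 hε ha
  have hM' := isUnit_det_one_sub_AtMR ha0 ha0sum hb0 hε ha'
  set y := (1 - AtMR a0 b0 B (Function.update a i x))⁻¹ *ᵥ a0n n a0
  have hy : (1 - AtMR a0 b0 B a - vecMulVec (x - a i) (Pi.single i 1)) *ᵥ y = a0n n a0 := by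
    rw [sub_sub, ← AtMR_update, mulVec_mulVec, mul_nonsing_inv _ hM', one_mulVec]
  have hyi := congrFun (eq_of_sub_vecMulVec_single_mulVec_eq hM hy) i
  have hy0 : 0 ≤ y i := sum_nonneg fun j _ =>
    mul_nonneg (inv_one_sub_AtMR_nonneg ha0 ha0sum hb0 hε ha' i j)
      (div_nonneg (ha0 j.1) n.cast_nonneg)
  have ht : ((1 - AtMR a0 b0 B a)⁻¹ *ᵥ (x - a i)) i ≤ 0 := by
    rw [mulVec, dotProduct_sub]
    exact sub_nonpos.mpr hbr
  simp only [Pi.add_apply, Pi.smul_apply, smul_eq_mul] at hyi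
  exact mul_le_mul_of_nonneg_left (by nlinarith) (hε i.1)

end Game

theorem clustered_profile_is_nash_general
    (n L : ℕ)
    (a0 : Fin L → ℝ) (ha0 : ∀ ℓ, 0 < a0 ℓ) (ha0sum : ∑ ℓ, a0 ℓ = 1)
    (γ : ℝ) (hγ : γ ∈ Set.Ioc (0 : ℝ) 1) :
    ∃ δ : ℝ, 0 < δ ∧
      ∀ (b0 : Fin L → ℝ) (B : Fin L → Fin L → ℝ),
        (∀ ℓ ℓ', 0 ≤ B ℓ ℓ') →
        (∀ ℓ, γ ≤ b0 ℓ) →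
        (∀ ℓ, 0 ≤ epsR b0 B ℓ ∧ epsR b0 B ℓ ≤ δ) →
        ∀ Q : Setoid (Fin n),
          (∀ i : Firm L n, (fun j => AQ B Q i j) ∈ StratR B i)
          ∧ ∀ i : Firm L n, ∀ x ∈ StratR B i,
              payoffR a0 b0 B i
                  (Function.update (fun i' j => AQ B Q i' j) i x)
                ≤ payoffR a0 b0 B i (fun i' j => AQ B Q i' j) := by
  refine ⟨1, one_pos, fun b0 B hB hb0 hε Q => ⟨AQ_mem_StratR hB Q, fun i x hx => ?_⟩⟩
  have hb0pos : ∀ ℓ, 0 < b0 ℓ := fun ℓ => hγ.1.trans_le (hb0 ℓ)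
  have hB1 : ∀ ℓ, ∑ ℓ', B ℓ ℓ' < 1 := fun ℓ => by
    linarith [(hε ℓ).1, hb0pos ℓ, show epsR b0 B ℓ = 1 - b0 ℓ - ∑ ℓ', B ℓ ℓ' from rfl]
  have ha0' : ∀ ℓ, 0 ≤ a0 ℓ := fun ℓ => (ha0 ℓ).le
  have hε' : ∀ ℓ, 0 ≤ epsR b0 B ℓ := fun ℓ => (hε ℓ).1
  have hprofile := AQ_mem_StratR hB Q
  refine payoffR_update_le ha0' ha0sum hb0pos hε' hprofile hx ?_
  have hrow := inv_one_sub_AtMR_row_eq (isUnit_det_one_sub_AtMR ha0' ha0sum hb0pos hε' hprofile) i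
  exact sum_mul_le_sum_mul_AQ (κ := fun m => epsR b0 B m * _) hrow hB hB1 hx

theorem clustered_profile_is_nash
    (n L : ℕ) (hn : 1 ≤ n) (hL : 1 ≤ L)
    (a0 : Fin L → ℝ) (ha0 : ∀ ℓ, 0 < a0 ℓ) (ha0sum : ∑ ℓ, a0 ℓ = 1)
    (γ : ℝ) (hγ : γ ∈ Set.Ioc (0 : ℝ) 1) :
    ∃ δ : ℝ, 0 < δ ∧
      ∀ (b0 : Fin L → ℝ) (B : Fin L → Fin L → ℝ),
        (∀ ℓ ℓ', 0 ≤ B ℓ ℓ') →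
        (∀ ℓ, γ ≤ b0 ℓ) →
        (∀ ℓ, 0 ≤ epsR b0 B ℓ ∧ epsR b0 B ℓ ≤ δ) →
        ∀ Q : Setoid (Fin n),
          (∀ i : Firm L n, (fun j => AQ B Q i j) ∈ StratR B i)
          ∧ ∀ i : Firm L n, ∀ x ∈ StratR B i,
              payoffR a0 b0 B i
                  (Function.update (fun i' j => AQ B Q i' j) i x)
                ≤ payoffR a0 b0 B i (fun i' j => AQ B Q i' j) :=
  clustered_profile_is_nash_general n L a0 ha0 ha0sum γ hγ

end
end

section
/- Let L ≥ 1 and m ≥ 1, let B = (b_{ℓ,ℓ'}) be an L×L matrix with nonnegative entries and every row sum strictly less than 1, and set C := (I − B)^{-1}. Let A be the (mL)×(mL) matrix indexed by pairs (ℓ,c) with ℓ ∈ {1,…,L}, c ∈ {1,…,m}, defined by A_{(ℓ,c),(ℓ,c)} = b_{ℓ,ℓ}, A_{(ℓ,c),(ℓ,c')} = 0 for c' ≠ c, and A_{(ℓ,c),(ℓ',c')} = b_{ℓ,ℓ'}/m for every ℓ' ≠ ℓ and every c'. Then I − A is invertible and its inverse has entries: ((I−A)^{-1})_{(ℓ,c),(ℓ,c)}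 = C_{ℓ,ℓ}/m + (m−1)/(m(1−b_{ℓ,ℓ})); ((I−A)^{-1})_{(ℓ,c),(ℓ,c')} = C_{ℓ,ℓ}/m − 1/(m(1−b_{ℓ,ℓ})) for c' ≠ c; and ((I−A)^{-1})_{(ℓ,c),(ℓ',c')} = C_{ℓ,ℓ'}/m for ℓ' ≠ ℓ. -/
/-!
Let `P` be the averaging projection on `ℝ^m`. The cluster matrix splits as
`A = B ⊗ P + diag(B) ⊗ (1 - P)`, so `I - A = (I - B) ⊗ P + (I - diag B) ⊗ (1 - P)`.
Because `P` and `1 - P` are complementary idempotents, such a sum is inverted term by term: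
`(I - A)⁻¹ = C ⊗ P + (I - diag B)⁻¹ ⊗ (1 - P)`, whose entries are the stated ones.
`I - B` is invertible because it is strictly diagonally dominant.
-/

noncomputable section

open Matrix
open scoped Kronecker

namespace Matrix

theorem diag_lt_one_of_nonneg_of_sum_row_lt_one {n : Type*} [Fintype n] {B : Matrix n n ℝ}
    (hB : ∀ i j, 0 ≤ B i j) (hrow : ∀ i, ∑ j, B i j < 1) (i : n) : B i i < 1 :=
  (Finset.single_le_sum (fun j _ => hB i j) (Finset.mem_univ i)).trans_lt (hrow i)

theorem isUnit_one_sub_of_nonneg_of_sum_row_lt_one {n : Type*} [Fintype n] [DecidableEq n]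
    {B : Matrix n n ℝ} (hB : ∀ i j, 0 ≤ B i j) (hrow : ∀ i, ∑ j, B i j < 1) :
    IsUnit (1 - B) := by
  refine (isUnit_iff_isUnit_det _).mpr (det_ne_zero_of_sum_row_lt_diag fun k => ?_).isUnit
  have hoff : ∀ j ∈ Finset.univ.erase k, ‖(1 - B) k j‖ = B k j := fun j hj => by
    rw [sub_apply, one_apply_ne' (Finset.ne_of_mem_erase hj), zero_sub, norm_neg,
      Real.norm_of_nonneg (hB k j)]
  have hdiag := diag_lt_one_of_nonneg_of_sum_row_lt_one hB hrow k
  rw [Finset.sum_congr rfl hoff, sub_apply, one_apply_eq, Real.norm_of_nonneg (by linarith),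
    lt_sub_iff_add_lt, Finset.sum_erase_add _ _ (Finset.mem_univ k)]
  exact hrow k

theorem kronecker_add_kronecker_one_sub_mul_eq_one {R l n : Type*} [CommRing R]
    [Fintype l] [DecidableEq l] [Fintype n] [DecidableEq n] {P : Matrix n n R}
    (hP : IsIdempotentElem P) {X Y U V : Matrix l l R} (hXY : X * Y = 1) (hUV : U * V = 1) :
    (X ⊗ₖ P + U ⊗ₖ (1 - P)) * (Y ⊗ₖ P + V ⊗ₖ (1 - P)) = 1 := by
  simp only [add_mul, mul_add, ← mul_kronecker_mul, hXY, hUV, hP.eq, hP.one_sub.eq,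
    hP.mul_one_sub_self, hP.one_sub_mul_self, kronecker_zero, add_zero, zero_add,
    ← kronecker_add, add_sub_cancel, one_kronecker_one]

def averaging (K n : Type*) [Field K] [Fintype n] : Matrix n n K :=
  of fun _ _ => (Fintype.card n : K)⁻¹

theorem isIdempotentElem_averaging {K n : Type*} [Field K] [Fintype n]
    (h : (Fintype.card n : K) ≠ 0) : IsIdempotentElem (averaging K n) := by
  ext i j
  simp [averaging, mul_apply]
  field_simp

end Matrix

theorem one_sub_cluster_eq_kronecker {L m : ℕ} (B : Matrix (Fin L) (Fin L) ℝ)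
    (A : Matrix (Fin L × Fin m) (Fin L × Fin m) ℝ)
    (hA : ∀ p q : Fin L × Fin m, A p q =
      if p.1 = q.1 then (if p = q then B p.1 p.1 else 0) else B p.1 q.1 / (m : ℝ)) :
    1 - A = (1 - B) ⊗ₖ averaging ℝ (Fin m) +
      (1 - diagonal B.diag) ⊗ₖ (1 - averaging ℝ (Fin m)) := by
  ext ⟨ℓ, c⟩ ⟨ℓ', c'⟩
  simp only [Matrix.sub_apply, Matrix.add_apply, kronecker_apply, hA, averaging, of_apply,
    one_apply, diagonal_apply, diag_apply, Prod.mk.injEq, Fintype.card_fin]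
  split_ifs <;> simp_all <;> ring

theorem cluster_inverse_general
    (L m : ℕ) (hm : 1 ≤ m)
    (B : Matrix (Fin L) (Fin L) ℝ)
    (hB : ∀ ℓ ℓ', 0 ≤ B ℓ ℓ') (hrow : ∀ ℓ, ∑ ℓ', B ℓ ℓ' < 1)
    (A : Matrix (Fin L × Fin m) (Fin L × Fin m) ℝ)
    (hA : ∀ p q : Fin L × Fin m, A p q =
      if p.1 = q.1 then (if p = q then B p.1 p.1 else 0)
      else B p.1 q.1 / (m : ℝ)) :
    IsUnit (1 - A) ∧
    ∀ p q : Fin L × Fin m,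
      (1 - A)⁻¹ p q =
        if p.1 = q.1 then
          (if p = q then
            (1 - B)⁻¹ p.1 p.1 / (m : ℝ) + ((m : ℝ) - 1) / ((m : ℝ) * (1 - B p.1 p.1))
          else
            (1 - B)⁻¹ p.1 p.1 / (m : ℝ) - 1 / ((m : ℝ) * (1 - B p.1 p.1)))
        else (1 - B)⁻¹ p.1 q.1 / (m : ℝ) := by
  have hm0 : (m : ℝ) ≠ 0 := by exact_mod_cast (by omega : m ≠ 0)
  have hdiag : ∀ ℓ, 1 - B ℓ ℓ ≠ 0 := fun ℓ =>
    sub_ne_zero.mpr (diag_lt_one_of_nonneg_of_sum_row_lt_one hB hrow ℓ).ne'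
  have hBinv : (1 - B) * (1 - B)⁻¹ = 1 := mul_nonsing_inv _
    ((isUnit_iff_isUnit_det _).mp (isUnit_one_sub_of_nonneg_of_sum_row_lt_one hB hrow))
  have hDinv : (1 - diagonal B.diag) * diagonal (fun ℓ => (1 - B ℓ ℓ)⁻¹) = 1 := by
    rw [← diagonal_one, diagonal_sub, diagonal_mul_diagonal]
    exact congrArg diagonal (funext fun ℓ => mul_inv_cancel₀ (hdiag ℓ))
  have key := kronecker_add_kronecker_one_sub_mul_eq_one
    (isIdempotentElem_averaging (n := Fin m) (by simpa using hm0)) hBinv hDinv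
  rw [← one_sub_cluster_eq_kronecker B A hA] at key
  refine ⟨IsUnit.of_mul_eq_one _ key, fun ⟨ℓ, c⟩ ⟨ℓ', c'⟩ => ?_⟩
  rw [inv_eq_right_inv key]
  simp only [Matrix.add_apply, kronecker_apply, averaging, of_apply, Matrix.sub_apply, one_apply,
    diagonal_apply, Fintype.card_fin]
  rcases eq_or_ne ℓ ℓ' with rfl | hℓ
  · rcases eq_or_ne c c' with rfl | hc
    · simp only [if_true]
      field_simp [hdiag ℓ]
    · simp only [if_true, hc, Prod.mk.injEq, and_false, if_false]
      field_simp [hdiag ℓ]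
      ring
  · simp [hℓ, div_eq_mul_inv]

theorem cluster_inverse
    (L m : ℕ) (hL : 1 ≤ L) (hm : 1 ≤ m)
    (B : Matrix (Fin L) (Fin L) ℝ)
    (hB : ∀ ℓ ℓ', 0 ≤ B ℓ ℓ') (hrow : ∀ ℓ, ∑ ℓ', B ℓ ℓ' < 1)
    (A : Matrix (Fin L × Fin m) (Fin L × Fin m) ℝ)
    (hA : ∀ p q : Fin L × Fin m, A p q =
      if p.1 = q.1 then (if p = q then B p.1 p.1 else 0)
      else B p.1 q.1 / (m : ℝ)) :
    IsUnit (1 - A) ∧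
    ∀ p q : Fin L × Fin m,
      (1 - A)⁻¹ p q =
        if p.1 = q.1 then
          (if p = q then
            (1 - B)⁻¹ p.1 p.1 / (m : ℝ) + ((m : ℝ) - 1) / ((m : ℝ) * (1 - B p.1 p.1))
          else
            (1 - B)⁻¹ p.1 p.1 / (m : ℝ) - 1 / ((m : ℝ) * (1 - B p.1 p.1)))
        else (1 - B)⁻¹ p.1 q.1 / (m : ℝ) :=
  cluster_inverse_general L m hm B hB hrow A hA

end
end

section
/- For any integers n, m ≥ 1 and any real numbers a_1,…,a_n, b_1,…,b_m: (m/n) · Σ_{1 ≤ i < j ≤ n} |a_i − a_j| + (n/m) · Σ_{1 ≤ i < j ≤ m} |b_i − b_j| ≤ Σ_{i=1}^{n} Σ_{j=1}^{m} |a_i − b_j|. -/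
/-!
Since `|x - y| = ∫ |1[x ≤ t] - 1[y ≤ t]| dt`, every sum of distances is the integral over the
threshold `t` of the same sum for the 0/1 vectors `(1[a i ≤ t])ᵢ` and `(1[b j ≤ t])ⱼ`. If these
have `p` and `q` ones, the difference of the two sides of the inequality, multiplied by `2nm`,
becomes `2 (m p - n q)² ≥ 0` at each threshold.
-/

open Finset MeasureTheory
open scoped symmDiff

theorem Set.Ici_symmDiff_Ici {α : Type*} [LinearOrder α] (x y : α) :
    Set.Ici x ∆ Set.Ici y = Set.Ico (min x y) (max x y) := by
  ext t
  simp only [Set.mem_symmDiff, Set.mem_Ici, Set.mem_Ico, min_le_iff, lt_max_iff, not_le]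
  grind

theorem abs_indicator_Ici_sub_indicator_Ici {α : Type*} [LinearOrder α] (x y : α) :
    (fun t => |(Set.Ici x).indicator 1 t - (Set.Ici y).indicator (1 : α → ℝ) t|)
      = (Set.Ico (min x y) (max x y)).indicator 1 := by
  ext t
  rw [← Set.abs_indicator_symmDiff, Set.Ici_symmDiff_Ici]
  exact abs_of_nonneg (Set.indicator_nonneg (fun _ _ => zero_le_one) t)

theorem integrable_abs_indicator_Ici_sub_indicator_Ici (x y : ℝ) :
    Integrable fun t => |(Set.Ici x).indicator 1 t - (Set.Ici y).indicator (1 : ℝ → ℝ) t| := by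
  rw [abs_indicator_Ici_sub_indicator_Ici]
  exact (integrable_indicator_iff measurableSet_Ico).2 (integrableOn_const measure_Ico_lt_top.ne)

theorem integral_abs_indicator_Ici_sub_indicator_Ici (x y : ℝ) :
    ∫ t, |(Set.Ici x).indicator 1 t - (Set.Ici y).indicator (1 : ℝ → ℝ) t| = |x - y| := by
  rw [abs_indicator_Ici_sub_indicator_Ici, integral_indicator_one measurableSet_Ico,
    Real.volume_real_Ico_of_le min_le_max, max_sub_min_eq_abs, abs_sub_comm]

theorem two_nsmul_sum_filter_lt_eq_sum_sum {ι M : Type*} [LinearOrder ι] [Fintype ι]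
    [AddCommMonoid M] (f : ι → ι → M) (hsymm : ∀ i j, f i j = f j i) (hdiag : ∀ i, f i i = 0) :
    2 • ∑ p ∈ (univ : Finset (ι × ι)).filter (fun p => p.1 < p.2), f p.1 p.2
      = ∑ i, ∑ j, f i j := by
  have hsplit : ∀ i j, f i j = (if i < j then f i j else 0) + (if j < i then f j i else 0) := by
    intro i j
    rcases lt_trichotomy i j with h | rfl | h
    · simp [h, h.not_gt]
    · simp [hdiag]
    · simp [h, h.not_gt, hsymm i j]
  rw [sum_filter, ← univ_product_univ, sum_product, two_nsmul,
    sum_congr rfl fun i _ => sum_congr rfl fun j _ => hsplit i j]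
  simp only [sum_add_distrib]
  rw [sum_comm (f := fun i j => if j < i then f j i else 0)]

section Fintype

variable {ι κ : Type*} [Fintype ι] [Fintype κ]

theorem integrable_sum_sum_abs_indicator_Ici_sub (a : ι → ℝ) (b : κ → ℝ) :
    Integrable fun t =>
      ∑ i, ∑ j, |(Set.Ici (a i)).indicator 1 t - (Set.Ici (b j)).indicator (1 : ℝ → ℝ) t| :=
  integrable_finsetSum _ fun _ _ => integrable_finsetSum _ fun _ _ =>
    integrable_abs_indicator_Ici_sub_indicator_Ici _ _

theorem sum_sum_abs_sub_eq_integral (a : ι → ℝ) (b : κ → ℝ) :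
    ∑ i, ∑ j, |a i - b j|
      = ∫ t, ∑ i, ∑ j, |(Set.Ici (a i)).indicator 1 t - (Set.Ici (b j)).indicator (1 : ℝ → ℝ) t| := by
  rw [integral_finsetSum _ fun _ _ => integrable_finsetSum _ fun _ _ =>
    integrable_abs_indicator_Ici_sub_indicator_Ici _ _]
  refine sum_congr rfl fun i _ => ?_
  rw [integral_finsetSum _ fun _ _ => integrable_abs_indicator_Ici_sub_indicator_Ici _ _]
  simp only [integral_abs_indicator_Ici_sub_indicator_Ici]

theorem sum_sum_abs_sub_of_zero_or_one {c : ι → ℝ} {d : κ → ℝ}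
    (hc : ∀ i, c i = 0 ∨ c i = 1) (hd : ∀ j, d j = 0 ∨ d j = 1) :
    ∑ i, ∑ j, |c i - d j|
      = Fintype.card κ * ∑ i, c i + Fintype.card ι * ∑ j, d j - 2 * (∑ i, c i) * ∑ j, d j := by
  have habs : ∀ i j, |c i - d j| = c i + d j - 2 * c i * d j := by
    intro i j
    rcases hc i with h | h <;> rcases hd j with h' | h' <;> norm_num [h, h']
  simp only [habs, sum_sub_distrib, sum_add_distrib, sum_const, card_univ, nsmul_eq_mul,
    ← mul_sum, ← sum_mul]

/-- `(card ι * card κ)²` times the energy distance `2 E|X - Y| - E|X - X'| - E|Y - Y'|` of the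
empirical distributions of `a` and `b`. -/
def scaledEnergyDistance (a : ι → ℝ) (b : κ → ℝ) : ℝ :=
  2 * Fintype.card ι * Fintype.card κ * ∑ i, ∑ j, |a i - b j|
    - Fintype.card κ ^ 2 * ∑ i, ∑ i', |a i - a i'|
    - Fintype.card ι ^ 2 * ∑ j, ∑ j', |b j - b j'|

theorem scaledEnergyDistance_of_zero_or_one {c : ι → ℝ} {d : κ → ℝ}
    (hc : ∀ i, c i = 0 ∨ c i = 1) (hd : ∀ j, d j = 0 ∨ d j = 1) :
    scaledEnergyDistance c d
      = 2 * (Fintype.card κ * ∑ i, c i - Fintype.card ι * ∑ j, d j) ^ 2 := by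
  rw [scaledEnergyDistance, sum_sum_abs_sub_of_zero_or_one hc hd,
    sum_sum_abs_sub_of_zero_or_one hc hc, sum_sum_abs_sub_of_zero_or_one hd hd]
  ring

theorem scaledEnergyDistance_eq_integral (a : ι → ℝ) (b : κ → ℝ) :
    scaledEnergyDistance a b = ∫ t, scaledEnergyDistance
      (fun i => (Set.Ici (a i)).indicator 1 t)
      (fun j => (Set.Ici (b j)).indicator (1 : ℝ → ℝ) t) := by
  have hab := (integrable_sum_sum_abs_indicator_Ici_sub a b).const_mul
    (2 * Fintype.card ι * Fintype.card κ)
  have haa := (integrable_sum_sum_abs_indicator_Ici_sub a a).const_mul (Fintype.card κ ^ 2)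
  have hbb := (integrable_sum_sum_abs_indicator_Ici_sub b b).const_mul (Fintype.card ι ^ 2)
  simp only [scaledEnergyDistance]
  rw [integral_sub, integral_sub, integral_const_mul, integral_const_mul, integral_const_mul,
    ← sum_sum_abs_sub_eq_integral, ← sum_sum_abs_sub_eq_integral, ← sum_sum_abs_sub_eq_integral]
  exacts [hab, haa, hab.sub haa, hbb]

theorem scaledEnergyDistance_nonneg (a : ι → ℝ) (b : κ → ℝ) : 0 ≤ scaledEnergyDistance a b := by
  rw [scaledEnergyDistance_eq_integral]
  refine integral_nonneg fun t => ?_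
  have hstep (s : Set ℝ) : s.indicator 1 t = (0 : ℝ) ∨ s.indicator 1 t = (1 : ℝ) :=
    Set.indicator_eq_zero_or_self s 1 t
  rw [Pi.zero_apply, scaledEnergyDistance_of_zero_or_one (fun _ => hstep _) (fun _ => hstep _)]
  positivity

end Fintype

theorem sum_pairwise_distances_inequality
    (n m : ℕ) (hn : 1 ≤ n) (hm : 1 ≤ m)
    (a : Fin n → ℝ) (b : Fin m → ℝ) :
    ((m : ℝ) / n) *
        (∑ p ∈ (Finset.univ : Finset (Fin n × Fin n)).filter (fun p => p.1 < p.2),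
          |a p.1 - a p.2|)
      + ((n : ℝ) / m) *
        (∑ p ∈ (Finset.univ : Finset (Fin m × Fin m)).filter (fun p => p.1 < p.2),
          |b p.1 - b p.2|)
      ≤ ∑ i : Fin n, ∑ j : Fin m, |a i - b j| := by
  have hn' : (0 : ℝ) < n := by exact_mod_cast hn
  have hm' : (0 : ℝ) < m := by exact_mod_cast hm
  have hpairs {k : ℕ} (c : Fin k → ℝ) :
      ∑ p ∈ (univ : Finset (Fin k × Fin k)).filter (fun p => p.1 < p.2), |c p.1 - c p.2|
        = (∑ i, ∑ j, |c i - c j|) / 2 := by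
    rw [← two_nsmul_sum_filter_lt_eq_sum_sum (fun i j => |c i - c j|)
      (fun _ _ => abs_sub_comm _ _) (fun _ => by simp), two_nsmul]
    ring
  have henergy := scaledEnergyDistance_nonneg a b
  rw [scaledEnergyDistance, Fintype.card_fin, Fintype.card_fin] at henergy
  calc _ = (m ^ 2 * ∑ i, ∑ i', |a i - a i'| + n ^ 2 * ∑ j, ∑ j', |b j - b j'|) / (2 * n * m) := by
        rw [hpairs, hpairs]
        field_simp
    _ ≤ ∑ i, ∑ j, |a i - b j| := by
        rw [div_le_iff₀ (by positivity)]
        linarith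
end
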